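/- The left Haar measure on the SSR group G is ds dx dy db dr/r³ and the right Haar measure is ds dx dy db dr/r; consequently G is non-unimodular with modular function Δ(s,x,y,b,r) = 1/r². -/

import Mathlib

open MeasureTheory ENNReal

/-- The SSR multiplication written on ℝ⁵ (meaningful on the set where r > 0). -/
noncomputable def ssrMul5 (g g' : ℝ × ℝ × ℝ × ℝ × ℝ) : ℝ × ℝ × ℝ × ℝ × ℝ :=
  (g.1 + g'.1 + g.2.1 * (g.2.2.2.2⁻¹ * g'.2.2.1)
      - g.2.2.2.1 * (g.2.2.2.2⁻¹ * g'.2.2.1) ^ 2 / 2,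
   g.2.1 + g.2.2.2.2 * g'.2.1 - g.2.2.2.1 * (g.2.2.2.2⁻¹ * g'.2.2.1),
   g.2.2.1 + g.2.2.2.2⁻¹ * g'.2.2.1,
   g.2.2.2.1 + g'.2.2.2.1 * g.2.2.2.2 ^ 2,
   g.2.2.2.2 * g'.2.2.2.2)

/-- Integration against the left Haar measure ds dx dy db dr/r³. -/
noncomputable def leftHaarInt (f : ℝ × ℝ × ℝ × ℝ × ℝ → ℝ≥0∞) : ℝ≥0∞ :=
  ∫⁻ p in {p : ℝ × ℝ × ℝ × ℝ × ℝ | 0 < p.2.2.2.2},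
    f p * ENNReal.ofReal (1 / p.2.2.2.2 ^ 3)

/-- Integration against the right Haar measure ds dx dy db dr/r. -/
noncomputable def rightHaarInt (f : ℝ × ℝ × ℝ × ℝ × ℝ → ℝ≥0∞) : ℝ≥0∞ :=
  ∫⁻ p in {p : ℝ × ℝ × ℝ × ℝ × ℝ | 0 < p.2.2.2.2},
    f p * ENNReal.ofReal (1 / p.2.2.2.2)

/-! Translations of G are triangular changes of variables on ℝ⁵: each coordinate of `g * p`
(resp. `p * g`) is a nonzero multiple of the same coordinate of `p` plus a function of the later
ones. By Fubini they scale Lebesgue measure by the product of the diagonal coefficients, which is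
`r₀⁻³` for left and `r₀⁻¹` for right translation by `g = (…, r₀)`. Both translations multiply the
last coordinate by `r₀`, so the weight `r⁻ⁿ` picks up the factor `r₀ⁿ`: it cancels for `n = 3` on
the left and `n = 1` on the right, and leaves `r₀³ · r₀⁻¹ = r₀²` for `dr/r³` on the right. -/

local notation "ℝ⁵" => ℝ × ℝ × ℝ × ℝ × ℝ

theorem Real.map_volume_mul_add {c : ℝ} (hc : c ≠ 0) (d : ℝ) :
    volume.map (fun s : ℝ => c * s + d) = ENNReal.ofReal |c⁻¹| • volume := by
  change volume.map ((· + d) ∘ (c * ·)) = _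
  rw [← Measure.map_map (measurable_add_const d) (measurable_const_mul c),
    Real.map_volume_mul_left hc, Measure.map_smul, map_add_right_eq_self]

theorem map_volume_triangular {β : Type*} [MeasureSpace β] [SFinite (volume : Measure β)]
    {c : ℝ} (hc : c ≠ 0) {d : β → ℝ} (hd : Measurable d) {T : β → β} (hT : Measurable T)
    {k : ℝ≥0∞} (hTk : volume.map T = k • volume) :
    volume.map (fun p : ℝ × β => (c * p.1 + d p.2, T p.2)) =
      (ENNReal.ofReal |c⁻¹| * k) • volume := by
  refine Measure.ext_of_lintegral _ fun F hF => ?_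
  have hG : Measurable fun w => ∫⁻ s, F (s, w) := hF.lintegral_prod_left'
  rw [lintegral_map hF (by fun_prop), lintegral_smul_measure, Measure.volume_eq_prod,
    lintegral_prod_symm (fun p : ℝ × β => F (c * p.1 + d p.2, T p.2))
      (hF.comp (by fun_prop)).aemeasurable,
    lintegral_prod_symm _ hF.aemeasurable]
  calc ∫⁻ w, ∫⁻ s, F (c * s + d w, T w)
      = ∫⁻ w, ENNReal.ofReal |c⁻¹| * ∫⁻ s, F (s, T w) := lintegral_congr fun w => by
        rw [← lintegral_map (f := fun s => F (s, T w)) (by fun_prop) (by fun_prop),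
          Real.map_volume_mul_add hc, lintegral_smul_measure, smul_eq_mul]
    _ = ENNReal.ofReal |c⁻¹| * ∫⁻ w, (∫⁻ s, F (s, w)) ∂volume.map T := by
        rw [lintegral_const_mul _ (f := fun w => ∫⁻ s, F (s, T w)) (hG.comp hT),
          lintegral_map hG hT]
    _ = _ := by rw [hTk, lintegral_smul_measure, smul_eq_mul, smul_eq_mul, mul_assoc]

theorem map_volume_ssrMul5_left {g : ℝ⁵} (hg : 0 < g.2.2.2.2) :
    volume.map (ssrMul5 g) = ENNReal.ofReal (g.2.2.2.2 ^ 3)⁻¹ • volume := by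
  obtain ⟨s₀, x₀, y₀, b₀, R⟩ := g
  have hR : R ≠ 0 := hg.ne'
  have h₄ := map_volume_triangular (pow_ne_zero 2 hR) (measurable_const (a := b₀))
    (measurable_const_mul R) (Real.map_volume_mul_left hR)
  have h₃ := map_volume_triangular (inv_ne_zero hR) (measurable_const (a := y₀)) (by fun_prop) h₄
  have h₂ := map_volume_triangular hR (d := fun w : ℝ × ℝ × ℝ => x₀ - b₀ * (R⁻¹ * w.1))
    (by fun_prop) (by fun_prop) h₃
  have h₁ := map_volume_triangular one_ne_zero
    (d := fun w : ℝ × ℝ × ℝ × ℝ => s₀ + x₀ * (R⁻¹ * w.2.1) - b₀ * (R⁻¹ * w.2.1) ^ 2 / 2)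
    (by fun_prop) (by fun_prop) h₂
  convert h₁ using 2
  · ext p <;> simp only [ssrMul5] <;> ring
  · simp only [← ENNReal.ofReal_mul (abs_nonneg _), ← abs_mul]
    rw [abs_of_pos (by positivity)]
    field_simp

theorem map_volume_ssrMul5_right {g : ℝ⁵} (hg : 0 < g.2.2.2.2) :
    volume.map (fun p => ssrMul5 p g) = ENNReal.ofReal g.2.2.2.2⁻¹ • volume := by
  obtain ⟨s₀, x₀, y₀, b₀, R⟩ := g
  have h₄ := map_volume_triangular one_ne_zero (d := fun r : ℝ => b₀ * r ^ 2)
    (by fun_prop) (measurable_const_mul R) (Real.map_volume_mul_left hg.ne')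
  have h₃ := map_volume_triangular one_ne_zero (d := fun w : ℝ × ℝ => w.2⁻¹ * y₀)
    (by fun_prop) (by fun_prop) h₄
  have h₂ := map_volume_triangular one_ne_zero
    (d := fun w : ℝ × ℝ × ℝ => w.2.2 * x₀ - w.2.1 * (w.2.2⁻¹ * y₀)) (by fun_prop) (by fun_prop) h₃
  have h₁ := map_volume_triangular one_ne_zero
    (d := fun w : ℝ × ℝ × ℝ × ℝ => s₀ + w.1 * (w.2.2.2⁻¹ * y₀) - w.2.2.1 * (w.2.2.2⁻¹ * y₀) ^ 2 / 2)
    (by fun_prop) (by fun_prop) h₂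
  convert h₁ using 2
  · ext p <;> simp only [ssrMul5] <;> ring
  · simp [abs_of_pos hg]

theorem lintegral_comp_mul_of_map_eq_smul {α : Type*} [MeasurableSpace α] {μ : Measure α}
    {φ : α → α} (hφ : Measurable φ) {k : ℝ≥0∞} (hφk : μ.map φ = k • μ)
    {W : α → ℝ≥0∞} (hW : Measurable W) {c : ℝ≥0∞} (hWc : ∀ p, W p = c * W (φ p))
    {f : α → ℝ≥0∞} (hf : Measurable f) :
    ∫⁻ p, f (φ p) * W p ∂μ = c * k * ∫⁻ p, f p * W p ∂μ := by
  calc ∫⁻ p, f (φ p) * W p ∂μ = ∫⁻ p, c * (f (φ p) * W (φ p)) ∂μ :=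
        lintegral_congr fun p => by rw [hWc p, mul_left_comm]
    _ = c * ∫⁻ p, f p * W p ∂μ.map φ := by
        rw [lintegral_const_mul c (f := fun p => f (φ p) * W (φ p)) (by fun_prop),
          lintegral_map (f := fun p => f p * W p) (by fun_prop) hφ]
    _ = _ := by rw [hφk, lintegral_smul_measure, smul_eq_mul, mul_assoc]

noncomputable def powWeight (n : ℕ) (r : ℝ) : ℝ≥0∞ :=
  (Set.Ioi 0).indicator (fun r => ENNReal.ofReal (1 / r ^ n)) r

theorem measurable_powWeight (n : ℕ) : Measurable (powWeight n) :=
  Measurable.indicator (by fun_prop) measurableSet_Ioi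

theorem powWeight_eq_ofReal_pow_mul (n : ℕ) {R : ℝ} (hR : 0 < R) (r : ℝ) :
    powWeight n r = ENNReal.ofReal (R ^ n) * powWeight n (R * r) := by
  by_cases hr : 0 < r
  · simp only [powWeight, Set.indicator_of_mem (show r ∈ Set.Ioi 0 from hr),
      Set.indicator_of_mem (show R * r ∈ Set.Ioi 0 from mul_pos hR hr)]
    rw [← ENNReal.ofReal_mul (by positivity)]
    congr 1
    field_simp
    ring
  · have hRr : ¬ 0 < R * r := fun h => hr (pos_of_mul_pos_right h hR.le)
    simp [powWeight, hr, hRr]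

theorem setLIntegral_pos_eq_lintegral_powWeight (n : ℕ) (f : ℝ⁵ → ℝ≥0∞) :
    ∫⁻ p in {p : ℝ⁵ | 0 < p.2.2.2.2}, f p * ENNReal.ofReal (1 / p.2.2.2.2 ^ n) =
      ∫⁻ p, f p * powWeight n p.2.2.2.2 := by
  rw [← lintegral_indicator (measurableSet_lt measurable_const (by fun_prop))]
  congr 1
  funext p
  by_cases hp : 0 < p.2.2.2.2 <;> simp [powWeight, hp]

theorem leftHaarInt_eq (f : ℝ⁵ → ℝ≥0∞) : leftHaarInt f = ∫⁻ p, f p * powWeight 3 p.2.2.2.2 :=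
  setLIntegral_pos_eq_lintegral_powWeight 3 f

theorem rightHaarInt_eq (f : ℝ⁵ → ℝ≥0∞) : rightHaarInt f = ∫⁻ p, f p * powWeight 1 p.2.2.2.2 := by
  rw [rightHaarInt]
  simpa only [pow_one] using setLIntegral_pos_eq_lintegral_powWeight 1 f

/-- ds dx dy db dr/r³ is a left Haar measure, ds dx dy db dr/r is a right Haar
measure, and the SSR group is non-unimodular with modular function
Δ(s,x,y,b,r) = 1/r² (so that right translation scales the left Haar measure by r²). -/
theorem ssr_haar_measures_and_modular_function
    (g : ℝ × ℝ × ℝ × ℝ × ℝ) (hg : 0 < g.2.2.2.2)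
    (f : ℝ × ℝ × ℝ × ℝ × ℝ → ℝ≥0∞) (hf : Measurable f) :
    leftHaarInt (fun p => f (ssrMul5 g p)) = leftHaarInt f ∧
    rightHaarInt (fun p => f (ssrMul5 p g)) = rightHaarInt f ∧
    leftHaarInt (fun p => f (ssrMul5 p g)) =
      (ENNReal.ofReal (1 / g.2.2.2.2 ^ 2))⁻¹ * leftHaarInt f := by
  have hL : Measurable (ssrMul5 g) := by unfold ssrMul5; fun_prop
  have hRt : Measurable fun p => ssrMul5 p g := by unfold ssrMul5; fun_prop
  have hW (n : ℕ) : Measurable fun p : ℝ⁵ => powWeight n p.2.2.2.2 :=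
    (measurable_powWeight n).comp (by fun_prop)
  have hWL (n : ℕ) (p : ℝ⁵) : powWeight n p.2.2.2.2 =
      ENNReal.ofReal (g.2.2.2.2 ^ n) * powWeight n (ssrMul5 g p).2.2.2.2 :=
    powWeight_eq_ofReal_pow_mul n hg _
  have hWR (n : ℕ) (p : ℝ⁵) : powWeight n p.2.2.2.2 =
      ENNReal.ofReal (g.2.2.2.2 ^ n) * powWeight n (ssrMul5 p g).2.2.2.2 := by
    rw [show (ssrMul5 p g).2.2.2.2 = g.2.2.2.2 * p.2.2.2.2 from mul_comm _ _]
    exact powWeight_eq_ofReal_pow_mul n hg _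
  simp only [leftHaarInt_eq, rightHaarInt_eq,
    lintegral_comp_mul_of_map_eq_smul hL (map_volume_ssrMul5_left hg) (hW _) (hWL _) hf,
    lintegral_comp_mul_of_map_eq_smul hRt (map_volume_ssrMul5_right hg) (hW _) (hWR _) hf,
    ← ENNReal.ofReal_mul (pow_nonneg hg.le _)]
  refine ⟨?_, ?_, ?_⟩
  · rw [mul_inv_cancel₀ (by positivity), ENNReal.ofReal_one, one_mul]
  · rw [pow_one, mul_inv_cancel₀ hg.ne', ENNReal.ofReal_one, one_mul]
  · rw [one_div, ENNReal.ofReal_inv_of_pos (by positivity), inv_inv]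
    congr 2
    field_simp
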